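/- Let K be a Hopf subalgebra of H. A simple subcoalgebra C of H satisfies CK = K (i.e., C is equivalent to the trivial subcoalgebra k·1 under the right-coset relation) if and only if C ⊆ K. Hence the equivalence class of the trivial subcoalgebra k·1 under the relation C ∼ D iff C ⊆ DK is exactly the set of simple subcoalgebras of K. -/

import Mathlib

/-!
If `C ⊆ K`, choose `c ∈ C` with `ε(c) ≠ 0`; one exists because `c = ∑ ε(c₁) c₂` with all `c₂ ∈ C`.
Then `ε(c) · 1 = ∑ c₁ S(c₂)` lies in `C · S(C) ⊆ CK`, so `1 ∈ CK` and
`K ⊆ CK · K = CK ⊆ K · K = K`. Conversely `C = C · 1 ⊆ CK`.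
-/

open TensorProduct

namespace MackeyPaper

noncomputable section

universe v

variable (k : Type) [Field k] [CharZero k] [IsAlgClosed k]
variable (H : Type) [Ring H] [HopfAlgebra k H]

/-- A subcoalgebra of `H`: a `k`-subspace `C` with `Δ(C) ⊆ C ⊗ C`. -/
def IsSubcoalgebra (C : Submodule k H) : Prop :=
  ∀ c ∈ C, Coalgebra.comul (R := k) c ∈
    LinearMap.range (TensorProduct.map C.subtype C.subtype)

/-- A simple (nonzero, minimal) subcoalgebra of `H`. -/
def IsSimpleSubcoalgebra (C : Submodule k H) : Prop :=
  IsSubcoalgebra k H C ∧ C ≠ ⊥ ∧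
    ∀ D : Submodule k H, D ≤ C → IsSubcoalgebra k H D → D ≠ ⊥ → D = C

/-- A Hopf subalgebra of `H`: a subalgebra which is a subcoalgebra and is
stable under the antipode. -/
def IsHopfSubalgebra (K : Subalgebra k H) : Prop :=
  IsSubcoalgebra k H K.toSubmodule ∧ ∀ x ∈ K, HopfAlgebra.antipode (R := k) x ∈ K

/-- `Λ` is the (two-sided) idempotent integral of the Hopf subalgebra `K`,
i.e. the integral normalized by `ε(Λ) = 1`. -/
def IsIdempotentIntegral (K : Subalgebra k H) (Λ : H) : Prop :=
  Λ ∈ K ∧ Coalgebra.counit (R := k) Λ = 1 ∧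
    ∀ x ∈ K, x * Λ = Coalgebra.counit (R := k) x • Λ ∧
      Λ * x = Coalgebra.counit (R := k) x • Λ

/-- A cocommutative element of `H`; the cocommutative elements of `H` form
the character ring `C(H^*)`. -/
def IsCocomm (x : H) : Prop :=
  (TensorProduct.comm k H H) (Coalgebra.comul (R := k) x) = Coalgebra.comul (R := k) x

/-- The character ring `C(H^*)`, i.e. the space of cocommutative elements of `H`,
as a `k`-subspace of `H`. -/
def charRing : Submodule k H :=
  LinearMap.ker ((TensorProduct.comm k H H).toLinearMap ∘ₗ Coalgebra.comul (R := k)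
      - Coalgebra.comul (R := k))

/-- `d` is the irreducible character (of `H^*`) associated to the simple
subcoalgebra `C`: the unique cocommutative element of `C` whose counit is the
positive square root of `dim_k C`. -/
def IsCharacterOf (d : H) (C : Submodule k H) : Prop :=
  d ∈ C ∧ IsCocomm k H d ∧
    Coalgebra.counit (R := k) d = ((Nat.sqrt (Module.finrank k ↥C) : ℕ) : k)

/-- The right coset `CK` of a subcoalgebra `C`, i.e. the subspace `C·K`. -/
def CKsub (K : Subalgebra k H) (C : Submodule k H) : Submodule k H :=
  C * K.toSubmodule

/-- The conjugate Hopf subalgebra `ᶜK` of `K` by a simple subcoalgebra `C`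
(with associated irreducible character `c`): the span of all simple
subcoalgebras of `H` whose irreducible character `d` satisfies
`d·c·Λ_K = ε(d)·c·Λ_K`.  (The condition is stated for all cocommutative
elements of `C` resp. `D`; this is equivalent, since the cocommutative
elements of a simple subcoalgebra are exactly the scalar multiples of its
irreducible character.) -/
def conjK (K : Subalgebra k H) (Λ : H) (C : Submodule k H) : Submodule k H :=
  sSup {D : Submodule k H | IsSimpleSubcoalgebra k H D ∧
    ∀ d ∈ D, IsCocomm k H d → ∀ c ∈ C, IsCocomm k H c →
      d * (c * Λ) = Coalgebra.counit (R := k) d • (c * Λ)}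

/-- A complete irredundant system of representatives (by simple subcoalgebras)
of the double cosets `L\H/K`.  (Taking `L = ⊥` gives a system of
representatives of the right cosets `H/K`.) -/
def IsDoubleCosetReps (L K : Subalgebra k H) {ι : Type} (rep : ι → Submodule k H) : Prop :=
  (∀ i, IsSimpleSubcoalgebra k H (rep i)) ∧
  (∀ i j, L.toSubmodule * rep i * K.toSubmodule = L.toSubmodule * rep j * K.toSubmodule
      → i = j) ∧
  (∀ C : Submodule k H, IsSimpleSubcoalgebra k H C →
      ∃ i, C ≤ L.toSubmodule * rep i * K.toSubmodule)

section Ind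

variable (K : Subalgebra k H) (M : Type v) [AddCommGroup M] [Module k M]
  [Module ↥K M] [IsScalarTower k ↥K M]

/-- The relations defining the induced module `H ⊗_K M` as a quotient of
`H ⊗_k M`: the `H`-submodule generated by the elements `a ⊗ m - 1 ⊗ a·m`
for `a ∈ K` (equivalently, spanned by all `h·a ⊗ m - h ⊗ a·m`). -/
def indRel : Submodule H (H ⊗[k] M) :=
  Submodule.span H {z | ∃ (a : ↥K) (m : M),
    z = (a : H) ⊗ₜ[k] m - (1 : H) ⊗ₜ[k] (a • m)}

/-- The induced module `M↑_K^H = H ⊗_K M`, a left `H`-module. -/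
abbrev Ind := (H ⊗[k] M) ⧸ indRel k H K M

variable (C : Submodule k H)

/-- The underlying space `CK ⊗_k M` of which the conjugate module `ᶜM` is a
quotient. -/
def CKM : Type _ := ↥(CKsub k H K C) ⊗[k] M

instance : AddCommGroup (CKM k H K M C) :=
  inferInstanceAs (AddCommGroup (↥(CKsub k H K C) ⊗[k] M))

instance : Module k (CKM k H K M C) :=
  inferInstanceAs (Module k (↥(CKsub k H K C) ⊗[k] M))

/-- The pure tensor `x ⊗ m` as an element of `CK ⊗_k M`. -/
def ckmk (x : ↥(CKsub k H K C)) (m : M) : CKM k H K M C := x ⊗ₜ[k] m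

/-- The relations defining the conjugate module `ᶜM = CK ⊗_K M` as a quotient
of `CK ⊗_k M`: `x·a ⊗ m - x ⊗ a·m` for `a ∈ K`. -/
def conjRel : Submodule k (CKM k H K M C) :=
  Submodule.span k {z | ∃ (x : ↥(CKsub k H K C)) (a : ↥K) (m : M)
    (hxa : (x : H) * (a : H) ∈ CKsub k H K C),
    z = ckmk k H K M C ⟨(x : H) * (a : H), hxa⟩ m - ckmk k H K M C x (a • m)}

/-- The conjugate module `ᶜM := CK ⊗_K M`. -/
abbrev ConjM := CKM k H K M C ⧸ conjRel k H K M C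

/-- The canonical copy of the conjugate module `ᶜM = CK ⊗_K M` inside
`H ⊗_K M` (the image of `CK ⊗_K M` under multiplication; this is indeed a
copy of `ᶜM` since `H` is a free right `K`-module and `CK` is one of the
coset summands). -/
def conjMsub : Submodule k (Ind k H K M) :=
  Submodule.span k {z | ∃ (x : H) (_ : x ∈ CKsub k H K C) (m : M),
    z = Submodule.Quotient.mk (x ⊗ₜ[k] m)}

end Ind

section Comp

variable (L K : Subalgebra k H) (Λ : H) (C : Submodule k H)
variable (M : Type v) [AddCommGroup M] [Module k M] [Module ↥K M] [IsScalarTower k ↥K M]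

/-- The underlying space `L ⊗_k (CK ⊗_k M)`. -/
def LCM : Type _ := ↥L ⊗[k] CKM k H K M C

instance : AddCommGroup (LCM k H L K C M) :=
  inferInstanceAs (AddCommGroup (↥L ⊗[k] CKM k H K M C))

instance : Module k (LCM k H L K C M) :=
  inferInstanceAs (Module k (↥L ⊗[k] CKM k H K M C))

/-- The pure tensor `l ⊗ w` as an element of `L ⊗_k (CK ⊗_k M)`. -/
def lcmk (l : ↥L) (w : CKM k H K M C) : LCM k H L K C M := l ⊗ₜ[k] w

/-- The relations defining `L ⊗_{L ∩ ᶜK} ᶜM` as a quotient of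
`L ⊗_k (CK ⊗_k M)`: the balancedness relations over `L ∩ ᶜK` (first set),
together with (the image of) the relations defining `ᶜM = CK ⊗_K M`
(second set). -/
def compRel : Submodule k (LCM k H L K C M) :=
  Submodule.span k
    ({z | ∃ (l : ↥L) (a : H) (haL : a ∈ L) (_ : a ∈ conjK k H K Λ C)
        (x : ↥(CKsub k H K C)) (m : M) (hax : a * (x : H) ∈ CKsub k H K C),
        z = lcmk k H L K C M ⟨(l : H) * a, mul_mem l.2 haL⟩ (ckmk k H K M C x m)
          - lcmk k H L K C M l (ckmk k H K M C ⟨a * (x : H), hax⟩ m)} ∪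
     {z | ∃ (l : ↥L) (x : ↥(CKsub k H K C)) (a : ↥K) (m : M)
        (hxa : (x : H) * (a : H) ∈ CKsub k H K C),
        z = lcmk k H L K C M l (ckmk k H K M C ⟨(x : H) * (a : H), hxa⟩ m)
          - lcmk k H L K C M l (ckmk k H K M C x (a • m))})

/-- The module `L ⊗_{L ∩ ᶜK} ᶜM` (a left `L`-module via multiplication on the
first tensor factor). -/
abbrev Comp := LCM k H L K C M ⧸ compRel k H L K Λ C M

end Comp

open DirectSum

section Mackey

variable (L K : Subalgebra k H) (Λ : H)

/-- The Mackey isomorphism property for the pair `(L, K)` at the `K`-module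
`M`: for any system of double coset representatives, the left-multiplication
map `⊕_C L ⊗_{L ∩ ᶜK} ᶜM → M↑_K^H↓_L^H`, `l ⊗ v ↦ l·v`, is an isomorphism of
`L`-modules.  (A `k`-linear map satisfying the displayed formula on the
spanning elements is automatically `L`-equivariant for the evident
`L`-actions, so this property is stated for `k`-linear maps.) -/
def MackeyAt (M : Type v) [AddCommGroup M] [Module k M] [Module ↥K M]
    [IsScalarTower k ↥K M] [Module.Finite k M] : Prop :=
  ∀ (ι : Type) [DecidableEq ι] (rep : ι → Submodule k H),
    IsDoubleCosetReps k H L K rep →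
    ∃ π : (⨁ i : ι, Comp k H L K Λ (rep i) M) →ₗ[k] Ind k H K M,
      Function.Bijective π ∧
      ∀ (i : ι) (l : ↥L) (x : ↥(CKsub k H K (rep i))) (m : M),
        π (DirectSum.of (fun i => Comp k H L K Λ (rep i) M) i
            (Submodule.Quotient.mk (lcmk k H L K (rep i) M l (ckmk k H K M (rep i) x m)))) =
          Submodule.Quotient.mk (((l : H) * (x : H)) ⊗ₜ[k] m)

/-- `(L, K)` is a Mackey pair of Hopf subalgebras of `H` (here `Λ` is the
idempotent integral of `K`): for every finite-dimensional `K`-module `M` the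
left-multiplication homomorphism `π_M` is an isomorphism. -/
def IsMackeyPair : Prop :=
  ∀ (M : Type v) [AddCommGroup M] [Module k M] [Module ↥K M]
    [IsScalarTower k ↥K M] [Module.Finite k M], MackeyAt k H L K Λ M

end Mackey


theorem Subalgebra.mul_toSubmodule_eq_of_le {R A : Type*} [CommSemiring R] [Semiring A]
    [Algebra R A] {C : Submodule R A} {K : Subalgebra R A} (hCK : C ≤ K.toSubmodule)
    (hone : (1 : A) ∈ C * K.toSubmodule) : C * K.toSubmodule = K.toSubmodule := by
  have hKK : K.toSubmodule * K.toSubmodule = K.toSubmodule := K.isIdempotentElem_toSubmodule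
  refine le_antisymm ((mul_le_mul_left hCK _).trans_eq hKK) ?_
  calc K.toSubmodule = 1 * K.toSubmodule := (one_mul _).symm
    _ ≤ C * K.toSubmodule * K.toSubmodule := mul_le_mul_left (Submodule.one_le.mpr hone) _
    _ = C * K.toSubmodule := by rw [mul_assoc, hKK]

section Subcoalgebra

variable {R A : Type} [Field R] [Ring A] [HopfAlgebra R A] {C : Submodule R A}

theorem IsSubcoalgebra.exists_counit_ne_zero (hC : IsSubcoalgebra R A C) (hC0 : C ≠ ⊥) :
    ∃ c ∈ C, Coalgebra.counit (R := R) c ≠ 0 := by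
  by_contra! hε
  refine hC0 (eq_bot_iff.2 fun c hc => ?_)
  obtain ⟨t, ht⟩ := hC c hc
  have hεC : Coalgebra.counit ∘ₗ C.subtype = 0 := LinearMap.ext fun x => hε x x.2
  have hc := Coalgebra.rTensor_counit_comul (R := R) c
  rw [← ht, ← LinearMap.comp_apply, LinearMap.rTensor_comp_map, hεC, map_zero_left] at hc
  simpa using (congrArg (TensorProduct.lid R A) hc).symm

theorem IsSubcoalgebra.algebraMap_counit_mem_mul (hC : IsSubcoalgebra R A C)
    {P : Submodule R A} (hCP : ∀ c ∈ C, HopfAlgebra.antipode R c ∈ P) {c : A} (hc : c ∈ C) :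
    algebraMap R A (Coalgebra.counit c) ∈ C * P := by
  obtain ⟨t, ht⟩ := hC c hc
  rw [← HopfAlgebra.mul_antipode_lTensor_comul_apply, ← ht]
  clear ht
  induction t using TensorProduct.induction_on with
  | zero => simp
  | tmul x y => simpa using Submodule.mul_mem_mul x.2 (hCP y y.2)
  | add x y hx hy => simpa only [map_add] using add_mem hx hy

theorem IsSubcoalgebra.one_mem_mul (hC : IsSubcoalgebra R A C) (hC0 : C ≠ ⊥)
    {P : Submodule R A} (hCP : ∀ c ∈ C, HopfAlgebra.antipode R c ∈ P) : (1 : A) ∈ C * P := by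
  obtain ⟨c, hc, hεc⟩ := hC.exists_counit_ne_zero hC0
  have h := Submodule.smul_mem _ (Coalgebra.counit c)⁻¹ (hC.algebraMap_counit_mem_mul hCP hc)
  rwa [Algebra.algebraMap_eq_smul_one, smul_smul, inv_mul_cancel₀ hεc, one_smul] at h

end Subcoalgebra

section Statements

variable [FiniteDimensional k H] [IsSemisimpleRing H]

/-- Lemma 18: a simple subcoalgebra `C` of `H` satisfies
`CK = K` (i.e. `C` is equivalent to the trivial subcoalgebra `k·1` under the
right-coset relation `C ∼ D ↔ C ⊆ DK`) if and only if `C ⊆ K`; hence the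
class of the trivial subcoalgebra consists exactly of the simple
subcoalgebras of `K`. -/
theorem statement_5 (K : Subalgebra k H) (hK : IsHopfSubalgebra k H K)
    (C : Submodule k H) (hC : IsSimpleSubcoalgebra k H C) :
    (C * K.toSubmodule = K.toSubmodule ↔ C ≤ K.toSubmodule) ∧
    (C ≤ Submodule.span k {(1 : H)} * K.toSubmodule ↔ C ≤ K.toSubmodule) := by
  have key : C * K.toSubmodule = K.toSubmodule ↔ C ≤ K.toSubmodule :=
    ⟨fun h => h ▸ le_mul_of_one_le_right' (Submodule.one_le.mpr K.one_mem), fun hCK =>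
      Subalgebra.mul_toSubmodule_eq_of_le hCK
        (hC.1.one_mem_mul hC.2.1 fun c hc => hK.2 c (hCK hc))⟩
  exact ⟨key, by rw [← Submodule.one_eq_span, one_mul]⟩

end Statements

end

end MackeyPaper
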